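/- arXiv:2001.00064 — 2 statements merged into one kernel-verified Lean document; each statement's English description precedes it below -/
import Mathlib

section
/- Every infinite convex tree with at most one path has a path. -/
/-- Initial segment α↾n = (α 0, ..., α (n-1)). -/
def restrict (α : ℕ → Bool) (n : ℕ) : List Bool := (List.range n).map α

/-- Concatenation of a finite binary sequence with an infinite one. -/
def catInf (u : List Bool) (α : ℕ → Bool) : ℕ → Bool :=
  fun i => if h : i < u.length then u.get ⟨i, h⟩ else α (i - u.length)

/-- Lexicographic order at first difference, for equal-length sequences. -/
def ltSeq (u v : List Bool) : Prop :=
  u.length = v.length ∧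
    ∃ k < u.length, u.take k = v.take k ∧ u.getD k false = false ∧ v.getD k false = true

/-- `u` has arbitrarily long extensions in `T`. -/
def HasLongExt (T : Set (List Bool)) (u : List Bool) : Prop :=
  ∀ n, ∃ v, v ∈ T ∧ v.length = u.length + n ∧ v.take u.length = u

lemma memOfHasLongExt {T : Set (List Bool)} {u : List Bool} (h : HasLongExt T u) : u ∈ T := by
  obtain ⟨v, hvT, hvlen, hvtake⟩ := h 0
  rw [show u.length = v.length by omega, List.take_length] at hvtake
  rwa [← hvtake]

lemma stepHasLongExt {T : Set (List Bool)} (htree : ∀ u ∈ T, ∀ n : ℕ, u.take n ∈ T)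
    {u : List Bool} (hu : HasLongExt T u) : ∃ b, HasLongExt T (u ++ [b]) := by
  by_contra hno
  push_neg at hno
  have hno' : ∀ b : Bool, ∃ n, ∀ v, v ∈ T → v.length = u.length + 1 + n →
      v.take (u.length + 1) ≠ u ++ [b] := by
    intro b
    have h := hno b
    unfold HasLongExt at h
    push_neg at h
    obtain ⟨n, hn⟩ := h
    refine ⟨n, fun v hvT hvlen hvtake => ?_⟩
    have := hn v hvT
    simp only [List.length_append, List.length_singleton] at this
    exact this (by omega) (by simpa using hvtake)
  choose nb hnb using hno'
  set N := max (nb false) (nb true) with hN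
  obtain ⟨v, hvT, hvlen, hvtake⟩ := hu (N + 1)
  have h1 : (v.take (u.length + 1)).length = u.length + 1 := by
    rw [List.length_take]; omega
  have h3 : (v.take (u.length + 1)).take u.length = u := by
    rw [List.take_take, min_eq_left (by omega)]; exact hvtake
  have h4 : ((v.take (u.length + 1)).drop u.length).length = 1 := by
    rw [List.length_drop, h1]; omega
  obtain ⟨b, hb⟩ := List.length_eq_one_iff.mp h4
  have hsplit : v.take (u.length + 1) = u ++ [b] := by
    conv_lhs => rw [← List.take_append_drop u.length (v.take (u.length + 1))]
    rw [h3, hb]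
  have hle : nb b ≤ N := by cases b <;> simp [hN]
  have hw : v.take (u.length + 1 + nb b) ∈ T := htree v hvT _
  have hwlen : (v.take (u.length + 1 + nb b)).length = u.length + 1 + nb b := by
    rw [List.length_take]; omega
  have hwtake : (v.take (u.length + 1 + nb b)).take (u.length + 1) = u ++ [b] := by
    rw [List.take_take, min_eq_left (by omega)]; exact hsplit
  exact hnb b _ hw hwlen hwtake

theorem infinite_convex_tree_at_most_one_path_has_path (T : Set (List Bool))
    (hdec : ∀ u : List Bool, u ∈ T ∨ u ∉ T)
    (htree : ∀ u ∈ T, ∀ n : ℕ, u.take n ∈ T)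
    (hinf : ∀ n : ℕ, ∃ u ∈ T, u.length = n)
    (hconvex : ∀ u v w : List Bool, u ∈ T → w ∈ T → ltSeq u v → ltSeq v w → v ∈ T)
    (hunique : ∀ α β : ℕ → Bool, (∃ n : ℕ, α n ≠ β n) →
      ∃ n : ℕ, restrict α n ∉ T ∨ restrict β n ∉ T) :
    ∃ α : ℕ → Bool, ∀ n : ℕ, restrict α n ∈ T := by
  classical
  have hbase : HasLongExt T [] := by
    intro n
    obtain ⟨u, huT, hulen⟩ := hinf n
    exact ⟨u, huT, by simpa using hulen, by simp⟩
  choose fb hfb using fun p : {u : List Bool // HasLongExt T u} =>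
    stepHasLongExt htree p.2
  let F : {u : List Bool // HasLongExt T u} → {u : List Bool // HasLongExt T u} :=
    fun p => ⟨p.1 ++ [fb p], hfb p⟩
  let g : ℕ → {u : List Bool // HasLongExt T u} := fun n => F^[n] ⟨[], hbase⟩
  have hgsucc : ∀ n, (g (n + 1)).1 = (g n).1 ++ [fb (g n)] := by
    intro n
    show (F^[n + 1] _).1 = _
    rw [Function.iterate_succ_apply']
  have hglen : ∀ n, (g n).1.length = n := by
    intro n
    induction n with
    | zero => rfl
    | succ n ih => rw [hgsucc n]; simp [ih]
  refine ⟨fun n => fb (g n), fun n => ?_⟩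
  have hres : restrict (fun n => fb (g n)) n = (g n).1 := by
    induction n with
    | zero => rfl
    | succ n ih =>
      rw [hgsucc n, ← ih]
      show (List.range (n + 1)).map _ = _
      rw [List.range_succ, List.map_append]
      rfl
  rw [hres]
  exact memOfHasLongExt (g n).2
end

section
/- Every detachable co-convex bar is a uniform bar. -/
theorem detachable_coconvex_bar_is_uniform (B : Set (List Bool))
    (hdec : ∀ u : List Bool, u ∈ B ∨ u ∉ B)
    (hcoconvex : ∀ u v w : List Bool, u ∉ B → w ∉ B → ltSeq u v → ltSeq v w → v ∉ B)
    (hbar : ∀ α : ℕ → Bool, ∃ n : ℕ, restrict α n ∈ B) :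
    ∃ N : ℕ, ∀ α : ℕ → Bool, ∃ n ≤ N, restrict α n ∈ B := by
  classical
  set U : ℕ → Set (ℕ → Bool) := fun n => {α | restrict α n ∈ B} with hU
  have hopen : ∀ n, IsOpen (U n) := by
    intro n
    rw [isOpen_iff_forall_mem_open]
    intro α hα
    refine ⟨Set.pi (Finset.range n : Set ℕ) (fun i => {α i}), ?_, ?_, ?_⟩
    · intro β hβ
      have hres : restrict β n = restrict α n := by
        unfold restrict
        apply List.map_congr_left
        intro x hx
        have := hβ x (by simpa using List.mem_range.mp hx)
        simpa using this
      show restrict β n ∈ B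
      rw [hres]; exact hα
    · exact isOpen_set_pi (Finset.range n).finite_toSet (fun i _ => isOpen_discrete _)
    · intro i _; rfl
  have hcover : (Set.univ : Set (ℕ → Bool)) ⊆ ⋃ n, U n := by
    intro α _
    obtain ⟨n, hn⟩ := hbar α
    exact Set.mem_iUnion.2 ⟨n, hn⟩
  obtain ⟨t, ht⟩ := isCompact_univ.elim_finite_subcover U hopen hcover
  refine ⟨t.sup id, fun α => ?_⟩
  have := ht (Set.mem_univ α)
  simp only [Set.mem_iUnion] at this
  obtain ⟨n, hn, hmem⟩ := this
  exact ⟨n, Finset.le_sup (f := id) hn, hmem⟩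
end
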